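/- arXiv:2006.16629 — 2 statements merged into one kernel-verified Lean document; each statement's English description precedes it below -/
import Mathlib

section
/- Let f : ℝ → ℝ be smooth and compactly supported, and let ε > 0 and t > 0. Then there exists a constant C > 0 (depending on f, ε, t) such that for all real α and all integers N ≥ 1, | R_2(f,α,N) − (1/N²) Σ_{|n| ≤ N^{1+ε}} f̂(n/N) Σ_{1 ≤ x_1 ≠ x_2 ≤ N} e(n(x_1^α − x_2^α)) | ≤ C N^{−t}, where the sum over n is over integers n with |n| ≤ N^{1+ε}. -/
open MeasureTheory Filter Finset

noncomputable def e (t : ℝ) : ℂ := Complex.exp (2 * Real.pi * Complex.I * t)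

/-- The Fourier transform `f̂(ξ) = ∫ f(x) e(−xξ) dx`. -/
noncomputable def fourierHat (f : ℝ → ℝ) (ξ : ℝ) : ℂ := ∫ x : ℝ, (f x : ℂ) * e (-(x * ξ))

/-- The pair correlation sum `R_2(f,α,N)` of the sequence `(n^α)`. -/
noncomputable def R2 (f : ℝ → ℝ) (α : ℝ) (N : ℕ) : ℝ :=
  (N : ℝ)⁻¹ * ∑ x₁ ∈ Finset.Icc 1 N, ∑ x₂ ∈ (Finset.Icc 1 N).erase x₁,
    ∑' m : ℤ, f ((N : ℝ) * ((x₁ : ℝ) ^ α - (x₂ : ℝ) ^ α - (m : ℝ)))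

/-! Poisson summation rewrites the periodized sum `∑ₘ f(N(y - m))` as `N⁻¹ ∑ₙ f̂(n/N) e(ny)`, so
`R₂(f, α, N)` is the same expression as the truncated sum but with `n` ranging over all of `ℤ`.
Since `f̂` is a Schwartz function, `|f̂(ξ)| ≪ₖ |ξ|^(-k-2)`; for `|n| > N^(1+ε)` we have
`|n/N| > N^ε`, so choosing `εk ≥ t + 2` bounds each discarded term by `≪ N^(-t) n^(-2)` times the
trivial bound `N²` on the exponential sum, and `∑ n^(-2)` converges. -/

open Real FourierTransform
open scoped ContDiff

lemma e_eq_fourierChar (x : ℝ) : e x = 𝐞 x := by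
  rw [Real.fourierChar_apply, e]; push_cast; ring_nf

lemma norm_e (x : ℝ) : ‖e x‖ = 1 := by
  rw [e_eq_fourierChar, Circle.norm_coe]

lemma fourier_coe_eq_e (n : ℤ) (y : ℝ) : fourier n (y : UnitAddCircle) = e (n * y) := by
  rw [fourier_coe_apply, e]; push_cast; ring_nf

lemma fourierHat_eq_fourier (f : ℝ → ℝ) (ξ : ℝ) :
    fourierHat f ξ = 𝓕 (fun x => (f x : ℂ)) ξ := by
  simp [fourierHat, Real.fourier_real_eq, e_eq_fourierChar, Circle.smul_def, mul_comm]

lemma Real.fourier_comp_mul_left {E : Type*} [NormedAddCommGroup E] [NormedSpace ℂ E]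
    (g : ℝ → E) {c : ℝ} (hc : c ≠ 0) (ξ : ℝ) :
    𝓕 (fun x => g (c * x)) ξ = |c⁻¹| • 𝓕 g (ξ / c) := by
  simp only [Real.fourier_real_eq]
  rw [← Measure.integral_comp_mul_left (fun u => 𝐞 (-(u * (ξ / c))) • g u) c]
  congr 1 with x
  field_simp

theorem tsum_comp_mul_sub_eq_tsum_fourierHat {f : ℝ → ℝ} (hf : ContDiff ℝ ∞ f)
    (hsupp : HasCompactSupport f) {c : ℝ} (hc : 0 < c) (y : ℝ) :
    ∑' m : ℤ, (f (c * (y - m)) : ℂ) = (c : ℂ)⁻¹ * ∑' n : ℤ, fourierHat f (n / c) * e (n * y) := by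
  have hg_supp : HasCompactSupport fun x => (f (c * x) : ℂ) := by
    simpa only [smul_eq_mul, Function.comp_def] using
      (hsupp.comp_smul hc.ne').comp_left Complex.ofReal_zero
  have hg_smooth : ContDiff ℝ ∞ fun x => (f (c * x) : ℂ) :=
    (Complex.ofRealCLM.contDiff.comp hf).comp (contDiff_const.mul contDiff_id)
  have hφ := (hg_supp.toSchwartzMap hg_smooth).tsum_eq_tsum_fourier y
  have hcoe : ⇑(hg_supp.toSchwartzMap hg_smooth) = fun x => (f (c * x) : ℂ) := rfl
  rw [← tsum_comp_neg, SchwartzMap.fourier_coe, hcoe] at hφ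
  have hfourier (ξ : ℝ) : 𝓕 (fun x => (f (c * x) : ℂ)) ξ = c⁻¹ * fourierHat f (ξ / c) := by
    rw [fourierHat_eq_fourier, ← abs_of_pos (inv_pos.2 hc), ← Complex.real_smul]
    exact Real.fourier_comp_mul_left (fun x => (f x : ℂ)) hc.ne' ξ
  simp_rw [hfourier, fourier_coe_eq_e, mul_assoc] at hφ
  push_cast at hφ
  rw [← tsum_mul_left, ← hφ]
  congr 1 with m

theorem fourierHat_decay {f : ℝ → ℝ} (hf : ContDiff ℝ ∞ f) (hsupp : HasCompactSupport f)
    (k : ℕ) : ∃ C > 0, ∀ ξ : ℝ, |ξ| ^ k * ‖fourierHat f ξ‖ ≤ C := by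
  have hg_supp : HasCompactSupport fun x => (f x : ℂ) := hsupp.comp_left Complex.ofReal_zero
  have hg_smooth : ContDiff ℝ ∞ fun x => (f x : ℂ) := Complex.ofRealCLM.contDiff.comp hf
  obtain ⟨C, hC, hdecay⟩ := (𝓕 (hg_supp.toSchwartzMap hg_smooth)).decay k 0
  refine ⟨C, hC, fun ξ => ?_⟩
  have hcoe : ⇑(hg_supp.toSchwartzMap hg_smooth) = fun x => (f x : ℂ) := rfl
  simpa [fourierHat_eq_fourier, SchwartzMap.fourier_coe, hcoe] using hdecay ξ

lemma summable_inv_sq_int : Summable fun n : ℤ => ((n : ℝ) ^ 2)⁻¹ := by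
  simpa [one_div] using Real.summable_one_div_int_pow.mpr one_lt_two

lemma summable_norm_int_div_of_decay {g : ℝ → ℂ} {C : ℝ} (hC : ∀ ξ, |ξ| ^ 2 * ‖g ξ‖ ≤ C)
    {c : ℝ} (hc : 0 < c) : Summable fun n : ℤ => ‖g (n / c)‖ := by
  refine .of_norm_bounded_eventually (summable_inv_sq_int.mul_left (C * c ^ 2)) ?_
  filter_upwards [eventually_cofinite_ne 0] with n hn
  have hn2 : 0 < (n : ℝ) ^ 2 := by positivity
  have hdecay := hC (n / c)
  rw [sq_abs, div_pow, div_mul_eq_mul_div, div_le_iff₀ (by positivity)] at hdecay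
  rw [norm_norm, mul_assoc, ← div_eq_mul_inv, ← mul_div_assoc, le_div_iff₀ hn2]
  linarith

lemma norm_int_div_le_of_decay {g : ℝ → ℂ} {k : ℕ} {C : ℝ}
    (hC : ∀ ξ, |ξ| ^ (k + 2) * ‖g ξ‖ ≤ C) {N ε t : ℝ} (hN : 1 ≤ N) (hk : t + 2 ≤ ε * k)
    {n : ℤ} (hn : N ^ (1 + ε) < |(n : ℝ)|) :
    ‖g (n / N)‖ ≤ C * N ^ (-t) * ((n : ℝ) ^ 2)⁻¹ := by
  have hN0 : 0 < N := by linarith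
  set ξ := (n : ℝ) / N with hξ_def
  have hξ : N ^ ε ≤ |ξ| := by
    rw [abs_div, abs_of_pos hN0, le_div_iff₀ hN0, ← Real.rpow_add_one hN0.ne', add_comm]
    exact hn.le
  have hpow : N ^ t * N ^ 2 ≤ |ξ| ^ k :=
    calc N ^ t * N ^ 2 = N ^ (t + 2) := by rw [Real.rpow_add hN0, Real.rpow_two]
      _ ≤ N ^ (ε * k) := Real.rpow_le_rpow_of_exponent_le hN hk
      _ = (N ^ ε) ^ k := Real.rpow_mul_natCast hN0.le ε k
      _ ≤ |ξ| ^ k := pow_le_pow_left₀ (by positivity) hξ k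
  have hdecay := hC ξ
  rw [pow_add, sq_abs] at hdecay
  have hn2 : (n : ℝ) ^ 2 = N ^ 2 * ξ ^ 2 := by rw [hξ_def]; field_simp
  have hn0 : (n : ℝ) ≠ 0 := by
    rintro h
    rw [h, abs_zero] at hn
    exact (Real.rpow_pos_of_pos hN0 _).not_gt hn
  rw [Real.rpow_neg hN0.le, mul_assoc, ← mul_inv, ← div_eq_mul_inv, le_div_iff₀ (by positivity)]
  calc ‖g ξ‖ * (N ^ t * (n : ℝ) ^ 2) = ‖g ξ‖ * ((N ^ t * N ^ 2) * ξ ^ 2) := by rw [hn2]; ring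
    _ ≤ ‖g ξ‖ * (|ξ| ^ k * ξ ^ 2) := by gcongr
    _ ≤ C := by linarith

theorem tsum_norm_int_div_le_of_decay {g : ℝ → ℂ}
    (hg : ∀ k : ℕ, ∃ C > 0, ∀ ξ, |ξ| ^ k * ‖g ξ‖ ≤ C) {ε : ℝ} (hε : 0 < ε) (t : ℝ) :
    ∃ C > 0, ∀ N : ℝ, 1 ≤ N →
      ∑' n : {n : ℤ | N ^ (1 + ε) < |(n : ℝ)|}, ‖g (n / N)‖ ≤ C * N ^ (-t) := by
  obtain ⟨k, hk⟩ : ∃ k : ℕ, t + 2 ≤ ε * k := by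
    obtain ⟨k, hk⟩ := exists_nat_ge ((t + 2) / ε)
    exact ⟨k, by rwa [div_le_iff₀ hε, mul_comm] at hk⟩
  obtain ⟨C, hC, hdecay⟩ := hg (k + 2)
  obtain ⟨C₂, -, hdecay₂⟩ := hg 2
  set T := ∑' n : ℤ, ((n : ℝ) ^ 2)⁻¹
  have hT : 0 < T := summable_inv_sq_int.tsum_pos (fun n => by positivity) 1 (by norm_num)
  refine ⟨C * T, by positivity, fun N hN => ?_⟩
  have hmajorant := summable_inv_sq_int.mul_left (C * N ^ (-t))
  calc ∑' n : {n : ℤ | N ^ (1 + ε) < |(n : ℝ)|}, ‖g (n / N)‖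
      ≤ ∑' n : {n : ℤ | N ^ (1 + ε) < |(n : ℝ)|}, C * N ^ (-t) * ((n : ℝ) ^ 2)⁻¹ :=
        Summable.tsum_le_tsum (fun n => norm_int_div_le_of_decay hdecay hN hk n.2)
          ((summable_norm_int_div_of_decay hdecay₂ (by linarith)).subtype _)
          (hmajorant.subtype _)
    _ ≤ ∑' n : ℤ, C * N ^ (-t) * ((n : ℝ) ^ 2)⁻¹ :=
        hmajorant.tsum_subtype_le _ _ (fun n => by positivity)
    _ = C * T * N ^ (-t) := by rw [tsum_mul_left]; ring

noncomputable def pairExpSum (u : ℕ → ℝ) (N : ℕ) (ξ : ℝ) : ℂ :=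
  ∑ x₁ ∈ Icc 1 N, ∑ x₂ ∈ (Icc 1 N).erase x₁, e (ξ * (u x₁ - u x₂))

lemma norm_pairExpSum_le (u : ℕ → ℝ) (N : ℕ) (ξ : ℝ) : ‖pairExpSum u N ξ‖ ≤ (N : ℝ) ^ 2 :=
  calc ‖pairExpSum u N ξ‖
      ≤ ∑ x₁ ∈ Icc 1 N, ∑ x₂ ∈ (Icc 1 N).erase x₁, ‖e (ξ * (u x₁ - u x₂))‖ :=
        (norm_sum_le _ _).trans (sum_le_sum fun _ _ => norm_sum_le _ _)
    _ = ∑ x₁ ∈ Icc 1 N, (((Icc 1 N).erase x₁).card : ℝ) := by simp [norm_e]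
    _ ≤ ∑ x₁ ∈ Icc 1 N, (N : ℝ) := by
        gcongr with x₁
        exact (card_erase_le).trans (by simp)
    _ = (N : ℝ) ^ 2 := by simp [sq]

theorem R2_eq_tsum {f : ℝ → ℝ} (hf : ContDiff ℝ ∞ f) (hsupp : HasCompactSupport f) (α : ℝ)
    {N : ℕ} (hN : 0 < N) :
    (R2 f α N : ℂ) =
      ((N : ℂ) ^ 2)⁻¹ * ∑' n : ℤ, fourierHat f (n / N) * pairExpSum (· ^ α) N n := by
  have hN' : (0 : ℝ) < N := by exact_mod_cast hN
  obtain ⟨C, -, hC⟩ := fourierHat_decay hf hsupp 2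
  have hsum (y : ℝ) : Summable fun n : ℤ => fourierHat f (n / N) * e (n * y) :=
    .of_norm (by simpa [norm_e] using summable_norm_int_div_of_decay hC hN')
  rw [R2]
  push_cast [Complex.ofReal_tsum]
  simp_rw [tsum_comp_mul_sub_eq_tsum_fourierHat hf hsupp hN', pairExpSum, mul_sum]
  rw [Summable.tsum_finsetSum fun x₁ _ => summable_sum fun x₂ _ => hsum _, mul_sum]
  refine sum_congr rfl fun x₁ _ => ?_
  rw [Summable.tsum_finsetSum fun x₂ _ => hsum _, mul_sum]
  refine sum_congr rfl fun x₂ _ => ?_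
  push_cast
  ring

lemma coe_Icc_neg_floor_floor_compl (X : ℝ) :
    ((Icc (-⌊X⌋) ⌊X⌋ : Finset ℤ) : Set ℤ)ᶜ = {n : ℤ | X < |(n : ℝ)|} := by
  ext n
  simp only [Set.mem_compl_iff, coe_Icc, Set.mem_Icc, ← abs_le, not_le, Int.floor_lt,
    Int.cast_abs, Set.mem_ofPred_eq]

theorem truncation_lemma_general (f : ℝ → ℝ) (hf : ContDiff ℝ (⊤ : ℕ∞) f)
    (hsupp : HasCompactSupport f) (ε t : ℝ) (hε : 0 < ε) :
    ∃ C > (0 : ℝ), ∀ (α : ℝ) (N : ℕ), 1 ≤ N →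
      ‖((R2 f α N : ℂ) -
        ((N : ℂ) ^ 2)⁻¹ * ∑ n ∈ Finset.Icc (-⌊(N : ℝ) ^ (1 + ε)⌋) ⌊(N : ℝ) ^ (1 + ε)⌋,
          fourierHat f ((n : ℝ) / N) *
            ∑ x₁ ∈ Finset.Icc 1 N, ∑ x₂ ∈ (Finset.Icc 1 N).erase x₁,
              e ((n : ℝ) * ((x₁ : ℝ) ^ α - (x₂ : ℝ) ^ α)))‖ ≤ C * (N : ℝ) ^ (-t) := by
  obtain ⟨C, hC, htail⟩ := tsum_norm_int_div_le_of_decay (fourierHat_decay hf hsupp) hε t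
  refine ⟨C, hC, fun α N hN => ?_⟩
  have hN₀ : (0 : ℝ) < N := by exact_mod_cast hN
  obtain ⟨C₂, -, hC₂⟩ := fourierHat_decay hf hsupp 2
  set G : ℤ → ℂ := fun n => fourierHat f (n / N) * pairExpSum (· ^ α) N n
  have hG (n : ℤ) : ‖G n‖ ≤ N ^ 2 * ‖fourierHat f (n / N)‖ := by
    rw [norm_mul, mul_comm]
    exact mul_le_mul_of_nonneg_right (norm_pairExpSum_le _ _ _) (norm_nonneg _)
  have hbound := (summable_norm_int_div_of_decay hC₂ hN₀).mul_left ((N : ℝ) ^ 2)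
  change ‖_ - _ * ∑ n ∈ _, G n‖ ≤ _
  rw [R2_eq_tsum hf hsupp α hN, ← mul_sub, ← (hbound.of_norm_bounded hG).sum_add_tsum_compl,
    add_sub_cancel_left, coe_Icc_neg_floor_floor_compl, norm_mul]
  calc _ ≤ ‖((N : ℂ) ^ 2)⁻¹‖ * ∑' n : {n : ℤ | (N : ℝ) ^ (1 + ε) < |(n : ℝ)|},
          (N : ℝ) ^ 2 * ‖fourierHat f (n / N)‖ := by
        gcongr
        exact tsum_of_norm_bounded (hbound.subtype _).hasSum fun n => hG n
    _ ≤ C * (N : ℝ) ^ (-t) := by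
        rw [tsum_mul_left, ← mul_assoc, norm_inv, norm_pow, Complex.norm_natCast,
          inv_mul_cancel₀ (by positivity), one_mul]
        exact htail N (by exact_mod_cast hN)

theorem truncation_lemma (f : ℝ → ℝ) (hf : ContDiff ℝ (⊤ : ℕ∞) f)
    (hsupp : HasCompactSupport f) (ε t : ℝ) (hε : 0 < ε) (ht : 0 < t) :
    ∃ C > (0 : ℝ), ∀ (α : ℝ) (N : ℕ), 1 ≤ N →
      ‖((R2 f α N : ℂ) -
        ((N : ℂ) ^ 2)⁻¹ * ∑ n ∈ Finset.Icc (-⌊(N : ℝ) ^ (1 + ε)⌋) ⌊(N : ℝ) ^ (1 + ε)⌋,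
          fourierHat f ((n : ℝ) / N) *
            ∑ x₁ ∈ Finset.Icc 1 N, ∑ x₂ ∈ (Finset.Icc 1 N).erase x₁,
              e ((n : ℝ) * ((x₁ : ℝ) ^ α - (x₂ : ℝ) ^ α)))‖ ≤ C * (N : ℝ) ^ (-t) :=
  truncation_lemma_general f hf hsupp ε t hε
end

section
/- Let d ≥ 2 be an integer, let u_1,…,u_d be nonzero real numbers, let 2 ≤ x_1 < x_2 < ⋯ < x_d ≤ N be real numbers, let A > 0, and define φ(α) := Σ_{r=1}^d u_r x_r^α for α ∈ J = [A, A+1]. Let ε > 0 and set λ := N^{−ε} |u_d| x_d^{A+1−d} ∏_{m=1}^{d−1} h_m, where h_m = x_{m+1} − x_m. Then there exists a constant C_{d,ε} > 0 depending only on d and ε such that M_d φ(α) ≥ C_{d,ε} λ > 0 for all α ∈ J, where M_d φ(α) := max_{1 ≤ i ≤ d} |φ^{(i)}(α)|. -/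
/-! With `t r = log (x r)` one has `φ⁽ⁱ⁾(α) = ∑ r, u r * x r ^ α * t r ^ i`. The polynomial
`T * ∏_{r < d} (T - t r)` has degree `d`, no constant term, and vanishes at every node `t r`
except the last, so the combination of `φ', …, φ⁽ᵈ⁾` with its coefficients equals
`u_d x_d ^ α * t_d * ∏_{r < d} (t_d - t r)`. The coefficients have `ℓ¹`-norm at most
`∏_{r < d} (1 + t r) ≤ (1 + log N) ^ (d - 1) ≪_ε N ^ ε`, while `t_d ≥ log 2` and, by concavity of
`log`, `t_d - t r ≥ (x_{r+1} - x r) / x_d`. -/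

open Finset Fin Polynomial

theorem iteratedDeriv_sum_mul_rpow {ι : Type*} [Fintype ι] (u x : ι → ℝ) (hx : ∀ r, 0 < x r)
    (i : ℕ) (α : ℝ) :
    iteratedDeriv i (fun β => ∑ r, u r * x r ^ β) α
      = ∑ r, u r * Real.log (x r) ^ i * x r ^ α := by
  induction i generalizing α with
  | zero => simp
  | succ i ih =>
    rw [iteratedDeriv_succ, funext ih]
    refine (HasDerivAt.fun_sum fun r _ => ?_).deriv
    exact (((Real.hasStrictDerivAt_const_rpow (hx r) α).hasDerivAt).const_mul
      (u r * Real.log (x r) ^ i)).congr_deriv (by ring)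

theorem sum_mul_eval_eq_sum_coeff_mul {R ι : Type*} [CommSemiring R] (s : Finset ι)
    (c t : ι → R) {p : R[X]} {n : ℕ} (hp : p.natDegree < n) :
    ∑ r ∈ s, c r * p.eval (t r) = ∑ j ∈ range n, p.coeff j * ∑ r ∈ s, c r * t r ^ j := by
  simp only [eval_eq_sum_range' hp, Finset.mul_sum]
  rw [Finset.sum_comm]
  exact Finset.sum_congr rfl fun j _ => Finset.sum_congr rfl fun r _ => by ring

theorem sum_abs_coeff_X_sub_C_mul_le (p : ℝ[X]) (a : ℝ) (n : ℕ) :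
    ∑ j ∈ range n, |((X - C a) * p).coeff j| ≤ (1 + |a|) * ∑ j ∈ range n, |p.coeff j| := by
  cases n with
  | zero => simp
  | succ n =>
    have hcoeff : ∀ j, ((X - C a) * p).coeff (j + 1) = p.coeff j - a * p.coeff (j + 1) := by
      intro j
      rw [sub_mul, coeff_sub, coeff_X_mul, coeff_C_mul]
    rw [Finset.sum_range_succ' _ n]
    calc ∑ j ∈ range n, |((X - C a) * p).coeff (j + 1)| + |((X - C a) * p).coeff 0|
        ≤ ∑ j ∈ range n, (|p.coeff j| + |a| * |p.coeff (j + 1)|) + |a| * |p.coeff 0| := by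
          gcongr with j
          · rw [hcoeff, ← abs_mul]
            exact abs_sub _ _
          · simp [mul_coeff_zero, abs_mul]
      _ = ∑ j ∈ range n, |p.coeff j|
            + |a| * ∑ j ∈ range (n + 1), |p.coeff j| := by
          rw [Finset.sum_add_distrib, ← Finset.mul_sum, Finset.sum_range_succ' _ n]; ring
      _ ≤ (1 + |a|) * ∑ j ∈ range (n + 1), |p.coeff j| := by
          rw [add_mul, one_mul]
          gcongr
          exact n.le_succ

theorem sum_abs_coeff_prod_X_sub_C_le {ι : Type*} (s : Finset ι) (a : ι → ℝ) (n : ℕ) :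
    ∑ j ∈ range n, |(∏ r ∈ s, (X - C (a r))).coeff j| ≤ ∏ r ∈ s, (1 + |a r|) := by
  classical
  induction s using Finset.induction_on with
  | empty =>
    cases n with
    | zero => simp
    | succ n => simp [Finset.sum_range_succ', coeff_one]
  | insert b s hb ih =>
    rw [Finset.prod_insert hb, Finset.prod_insert hb]
    exact (sum_abs_coeff_X_sub_C_mul_le _ _ n).trans (by gcongr)

theorem one_add_log_pow_le {N ε : ℝ} (hN : 1 ≤ N) (hε : 0 < ε) (k : ℕ) :
    (1 + Real.log N) ^ k ≤ (1 + k / ε) ^ k * N ^ ε := by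
  rcases eq_or_ne k 0 with rfl | hk
  · simpa using Real.one_le_rpow hN hε.le
  have hδ : 0 < ε / k := by positivity
  have hlog : 1 + Real.log N ≤ (1 + k / ε) * N ^ (ε / k) := by
    have h1 : 1 ≤ N ^ (ε / k) := Real.one_le_rpow hN hδ.le
    have h2 := Real.log_le_rpow_div (x := N) (by linarith) hδ
    rw [div_div_eq_mul_div] at h2
    linarith [show (1 + k / ε) * N ^ (ε / k) = N ^ (ε / k) + N ^ (ε / k) * k / ε by ring]
  calc (1 + Real.log N) ^ k ≤ ((1 + k / ε) * N ^ (ε / k)) ^ k := by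
        gcongr
        linarith [Real.log_nonneg hN]
    _ = (1 + k / ε) ^ k * N ^ ε := by
        rw [mul_pow, ← Real.rpow_mul_natCast (by linarith), div_mul_cancel₀ _ (by positivity)]

theorem div_le_log_sub_log {a b : ℝ} (ha : 0 < a) (hab : a ≤ b) :
    (b - a) / b ≤ Real.log b - Real.log a := by
  have hb : 0 < b := ha.trans_le hab
  have := Real.one_sub_inv_le_log_of_pos (div_pos hb ha)
  rwa [Real.log_div hb.ne' ha.ne', inv_div, one_sub_div hb.ne'] at this

theorem abs_mul_prod_sub_le_of_abs_sum_pow_le {n : ℕ} (c t : Fin (n + 1) → ℝ) {B : ℝ}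
    (hB : ∀ i ∈ Icc 1 (n + 1), |∑ r, c r * t r ^ i| ≤ B) :
    |c (last n) * (t (last n) * ∏ m : Fin n, (t (last n) - t m.castSucc))|
      ≤ (∏ m : Fin n, (1 + |t m.castSucc|)) * B := by
  set Q : ℝ[X] := ∏ m : Fin n, (X - C (t m.castSucc))
  have hQ : Q.natDegree < n + 1 := by simp [Q]
  have hroot : ∀ m : Fin n, Q.eval (t m.castSucc) = 0 := fun m => by
    simp only [Q, eval_prod]
    exact Finset.prod_eq_zero (mem_univ m) (by simp)
  -- `X * Q` vanishes at every node but the last, so pairing it with the power sums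
  -- isolates `c (last n)`.
  have hpair : c (last n) * (t (last n) * ∏ m : Fin n, (t (last n) - t m.castSucc))
      = ∑ j ∈ range (n + 1), Q.coeff j * ∑ r, c r * t r ^ (j + 1) := by
    calc _ = ∑ r, c r * t r * Q.eval (t r) := by
          rw [Fin.sum_univ_castSucc]
          simp [hroot, Q, eval_prod, mul_assoc]
      _ = _ := by
          rw [sum_mul_eval_eq_sum_coeff_mul _ _ _ hQ]
          simp only [pow_succ, mul_assoc, mul_comm (t _)]
  have hB0 : 0 ≤ B := (abs_nonneg _).trans (hB 1 (by simp))
  rw [hpair]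
  calc _ ≤ ∑ j ∈ range (n + 1), |Q.coeff j| * B := by
        refine (abs_sum_le_sum_abs _ _).trans (Finset.sum_le_sum fun j hj => ?_)
        rw [abs_mul]
        gcongr
        exact hB _ (by simp at hj ⊢; omega)
    _ ≤ _ := by
        rw [← Finset.sum_mul]
        gcongr
        exact sum_abs_coeff_prod_X_sub_C_le _ _ _

theorem prod_sub_div_pow_le_prod_log_sub_log {n : ℕ} (x : Fin (n + 1) → ℝ) (hx : StrictMono x)
    (hx0 : 0 < x 0) :
    (∏ m : Fin n, (x m.succ - x m.castSucc)) / x (last n) ^ n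
      ≤ ∏ m : Fin n, (Real.log (x (last n)) - Real.log (x m.castSucc)) := by
  have hpos : ∀ r, 0 < x r := fun r => hx0.trans_le (hx.monotone (Fin.zero_le r))
  rw [← Fin.prod_const n (x (last n)), ← Finset.prod_div_distrib]
  refine Finset.prod_le_prod (fun m _ => div_nonneg (sub_nonneg.2 (hx m.castSucc_lt_succ).le)
    (hpos _).le) fun m _ => ?_
  calc (x m.succ - x m.castSucc) / x (last n)
      ≤ (x (last n) - x m.castSucc) / x (last n) := by
        gcongr
        exacts [(hpos _).le, hx.monotone (Fin.le_last _)]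
    _ ≤ _ := div_le_log_sub_log (hpos _) (hx.monotone (Fin.le_last _))

/-- The paper's `λ`, for `d = n + 1` nodes indexed from `0`. -/
noncomputable def repulsionScale {n : ℕ} (ε N A : ℝ) (u x : Fin (n + 1) → ℝ) : ℝ :=
  N ^ (-ε) * |u (last n)| * x (last n) ^ (A + 1 - ((n + 1 : ℕ) : ℝ)) *
    ∏ m : Fin n, (x m.succ - x m.castSucc)

theorem repulsionScale_pos {n : ℕ} {ε N A : ℝ} {u x : Fin (n + 1) → ℝ} (hN : 0 < N)
    (hu : u (last n) ≠ 0) (hx : StrictMono x) (hx0 : 0 < x 0) :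
    0 < repulsionScale ε N A u x := by
  have hxL : 0 < x (last n) := hx0.trans_le (hx.monotone (Fin.zero_le _))
  have hgaps : 0 < ∏ m : Fin n, (x m.succ - x m.castSucc) :=
    Finset.prod_pos fun m _ => sub_pos.2 (hx m.castSucc_lt_succ)
  unfold repulsionScale
  have := Real.rpow_pos_of_pos hN (-ε)
  have := Real.rpow_pos_of_pos hxL (A + 1 - ((n + 1 : ℕ) : ℝ))
  positivity

theorem mul_repulsionScale_le {n : ℕ} {ε N A α B : ℝ} (hε : 0 < ε) (u x : Fin (n + 1) → ℝ)
    (hx0 : 2 ≤ x 0) (hx : StrictMono x) (hxN : x (last n) ≤ N) (hα : A ≤ α)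
    (hB : ∀ i ∈ Icc 1 (n + 1), |iteratedDeriv i (fun β => ∑ r, u r * x r ^ β) α| ≤ B) :
    Real.log 2 / (1 + n / ε) ^ n * repulsionScale ε N A u x ≤ B := by
  set L := last n
  set K := (1 + n / ε) ^ n
  set gaps := ∏ m : Fin n, (x m.succ - x m.castSucc)
  have hx2 : ∀ r, 2 ≤ x r := fun r => hx0.trans (hx.monotone (Fin.zero_le r))
  have hxpos : ∀ r, 0 < x r := fun r => by linarith [hx2 r]
  have hN : 1 ≤ N := by linarith [hx2 L]
  have hlogpos : ∀ r, 0 < Real.log (x r) := fun r => Real.log_pos (by linarith [hx2 r])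
  have hK : 0 < K := pow_pos (by positivity) n
  have hgaps : 0 ≤ gaps / x L ^ n :=
    div_nonneg (Finset.prod_nonneg fun m _ => sub_nonneg.2 (hx m.castSucc_lt_succ).le)
      (pow_nonneg (hxpos L).le n)
  have hpair := abs_mul_prod_sub_le_of_abs_sum_pow_le (fun r => u r * x r ^ α)
    (fun r => Real.log (x r)) (B := B) fun i hi => by
      simpa [iteratedDeriv_sum_mul_rpow u x hxpos, mul_right_comm] using hB i hi
  have hnodes : Real.log 2 * (gaps / x L ^ n)
      ≤ Real.log (x L) * ∏ m : Fin n, (Real.log (x L) - Real.log (x m.castSucc)) :=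
    mul_le_mul (Real.log_le_log two_pos (hx2 L))
      (prod_sub_div_pow_le_prod_log_sub_log x hx (hxpos 0)) hgaps (hlogpos L).le
  have hweights : ∏ m : Fin n, (1 + |Real.log (x m.castSucc)|) ≤ K * N ^ ε := by
    refine le_trans ?_ (one_add_log_pow_le hN hε n)
    rw [← Fin.prod_const]
    gcongr with m
    rw [abs_of_pos (hlogpos _)]
    exact Real.log_le_log (hxpos _) ((hx.monotone (Fin.le_last _)).trans hxN)
  have hB0 : 0 ≤ B := (abs_nonneg _).trans (hB 1 (by simp))
  have hxα : x L ^ A ≤ x L ^ α := (Real.rpow_le_rpow_left_iff (by linarith [hx2 L])).2 hα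
  rw [abs_mul, abs_mul, abs_of_pos (Real.rpow_pos_of_pos (hxpos L) α),
    abs_of_nonneg (hnodes.trans' (by positivity))] at hpair
  calc Real.log 2 / K * repulsionScale ε N A u x
      = N ^ (-ε) / K * (|u L| * x L ^ A * (Real.log 2 * (gaps / x L ^ n))) := by
        rw [repulsionScale, Nat.cast_add_one, add_sub_add_right_eq_sub,
          Real.rpow_sub_natCast (hxpos L).ne']
        ring
    _ ≤ N ^ (-ε) / K * (|u L| * x L ^ α * (Real.log (x L) *
          ∏ m : Fin n, (Real.log (x L) - Real.log (x m.castSucc)))) := by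
        have := Real.rpow_pos_of_pos (hxpos L) α
        gcongr
    _ ≤ N ^ (-ε) / K * (K * N ^ ε * B) :=
        mul_le_mul_of_nonneg_left (hpair.trans (by gcongr))
          (div_pos (Real.rpow_pos_of_pos (by linarith) _) hK).le
    _ = B := by
        rw [Real.rpow_neg (by linarith)]
        field_simp

/-- Repulsion principle: `M_d φ(α) ≥ C_{d,ε} λ > 0` throughout `J = [A, A+1]` for
`φ(α) = Σ_r u_r x_r^α`, where `λ = N^{−ε} |u_d| x_d^{A+1−d} ∏ h_m` and
`M_d φ(α) = max_{1 ≤ i ≤ d} |φ^{(i)}(α)|`. -/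
theorem repulsion_derivative_lower_bound (d : ℕ) (hd : 2 ≤ d) (ε : ℝ) (hε : 0 < ε) :
    ∃ C > (0 : ℝ), ∀ (N A : ℝ) (u x : Fin d → ℝ), 0 < A →
      (∀ r, u r ≠ 0) → 2 ≤ x ⟨0, by omega⟩ → StrictMono x → x ⟨d - 1, by omega⟩ ≤ N →
      ∀ α ∈ Set.Icc A (A + 1),
        0 < C * (N ^ (-ε) * |u ⟨d - 1, by omega⟩| * (x ⟨d - 1, by omega⟩) ^ (A + 1 - d) *
            ∏ m : Fin (d - 1),
              (x ⟨m.1 + 1, by have := m.2; omega⟩ - x ⟨m.1, by have := m.2; omega⟩)) ∧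
        ∃ i, 1 ≤ i ∧ i ≤ d ∧
          C * (N ^ (-ε) * |u ⟨d - 1, by omega⟩| * (x ⟨d - 1, by omega⟩) ^ (A + 1 - d) *
              ∏ m : Fin (d - 1),
                (x ⟨m.1 + 1, by have := m.2; omega⟩ - x ⟨m.1, by have := m.2; omega⟩)) ≤
            |iteratedDeriv i (fun β => ∑ r, u r * (x r) ^ β) α| := by
  obtain ⟨n, rfl⟩ : ∃ n, d = n + 1 := ⟨d - 1, by omega⟩
  refine ⟨Real.log 2 / (1 + n / ε) ^ n, by positivity, ?_⟩
  intro N A u x _ hu (hx0 : 2 ≤ x 0) hx (hxN : x (last n) ≤ N) α hα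
  change 0 < _ * repulsionScale ε N A u x ∧
    ∃ i, 1 ≤ i ∧ i ≤ n + 1 ∧ _ * repulsionScale ε N A u x ≤ _
  obtain ⟨i, hi, hmax⟩ := (Icc 1 (n + 1)).exists_max_image
    (fun i => |iteratedDeriv i (fun β => ∑ r, u r * x r ^ β) α|) ⟨1, by simp⟩
  have hxL : 2 ≤ x (last n) := hx0.trans (hx.monotone (Fin.zero_le _))
  refine ⟨mul_pos (by positivity) (repulsionScale_pos (by linarith) (hu _) hx (by linarith)),
    i, (mem_Icc.1 hi).1, (mem_Icc.1 hi).2, mul_repulsionScale_le hε u x hx0 hx hxN hα.1 hmax⟩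
end
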